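/- arXiv:2002.11775 — 2 statements merged into one kernel-verified Lean document; each statement's English description precedes it below -/
import Mathlib

section
/- Given a fixed initial state x₀, for each i ∈ {2,…,T} there exists a finite set 𝒦′_i of sequences (j₁,…,j_{i−1}) of non-negative integers and finite positive constants α′_i^{(j₁,…,j_{i−1})}(x₀), independent of the observations and the control, such that for every admissible control u ∈ U, every observation sequence (y₁,…,y_T), and every t ∈ [i−1, i], |c(x_i(t), u(t))| ≤ Σ_{(j₁,…,j_{i−1}) ∈ 𝒦′_i} α′_i^{(j₁,…,j_{i−1})}(x₀) ∏_{m=1}^{i−1} ‖y_m‖₂^{j_m}; for i = 1 there is a finite positive constant α′₁(x₀) with |c(x₁(t),u(t))| ≤ α′₁(x₀) for all t ∈ [0,1]; and there is a finite set 𝒦′_{T+1} and constants α′_{T+1}^{(j₁,…,j_T)}(x₀) such that |h(x(T))| ≤ Σ_{(j₁,…,j_T) ∈ 𝒦′_{T+1}} α′_{T+1}^{(j₁,…,j_T)}(x₀) ∏_{m=1}^{T} ‖y_m‖₂^{j_m}. -/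
/-!
Along each mode the Lipschitz bound gives `‖f x u‖ ≤ K₁ ‖x‖ + (‖f 0 0‖ + K₁ ρmax)`, so
Grönwall's inequality bounds `‖x_i‖` on `[i - 1, i]` affinely in `‖x_i (i - 1)‖`, uniformly in the
control. Since the jump map grows polynomially, induction on the mode gives
`‖x_i t‖ ≤ α_i (∏_{k < i} (1 + ‖y_k‖)) ^ N_i`; the polynomial growth of `c` and `h` carries this
over to the costs, and `(1 + a) ^ N ≤ 2 ^ (N - 1) (1 + a ^ N)` expands the product into monomials.
-/

open Set MeasureTheory Filter Topology

noncomputable section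

open scoped Classical

abbrev EucSp (n : ℕ) := EuclideanSpace ℝ (Fin n)

/-- A function is piecewise continuous on `s` if it is continuous within `s` outside of a
finite set of points. -/
def PiecewiseContinuousOn {E : Type*} [TopologicalSpace E] (u : ℝ → E) (s : Set ℝ) : Prop :=
  ∃ D : Finset ℝ, ∀ t ∈ s, t ∉ D → ContinuousWithinAt u s t

/-- Admissible controls: piecewise continuous functions on `[0, T]` with values in the
closed ball of radius `ρmax`. -/
def AdmissibleCtrl {m : ℕ} (T ρmax : ℝ) (u : ℝ → EucSp m) : Prop :=
  PiecewiseContinuousOn u (Set.Icc 0 T) ∧ ∀ t ∈ Set.Icc (0 : ℝ) T, ‖u t‖ ≤ ρmax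

/-- `x` is a (Carathéodory) solution of `ẋ = f(x, u(t))` on `[a, b]`, in integral form. -/
def IsSolOn {nx m : ℕ} (f : EucSp nx → EucSp m → EucSp nx) (u : ℝ → EucSp m)
    (a b : ℝ) (x : ℝ → EucSp nx) : Prop :=
  ContinuousOn x (Set.Icc a b) ∧
    ∀ t ∈ Set.Icc a b, x t = x a + ∫ s in a..t, f (x s) (u s)

/-- The modes `x i : [i-1, i] → ℝ^{n_x}` of the hybrid system with time-driven switching:
`x 1 0 = x₀`, each mode solves `ẋ = f(x, u)` on `[i-1, i]`, and modes are linked by the jump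
map `g` with observation `y i`. -/
def HybridModes {nx ny m : ℕ} (T : ℕ) (f : EucSp nx → EucSp m → EucSp nx)
    (g : EucSp nx → EucSp ny → EucSp nx) (u : ℝ → EucSp m) (y : ℕ → EucSp ny)
    (x₀ : EucSp nx) (x : ℕ → ℝ → EucSp nx) : Prop :=
  x 1 0 = x₀ ∧
    (∀ i : ℕ, 1 ≤ i → i ≤ T → IsSolOn f u ((i : ℝ) - 1) (i : ℝ) (x i)) ∧
    (∀ i : ℕ, 1 ≤ i → i + 1 ≤ T → x (i + 1) (i : ℝ) = g (x i (i : ℝ)) (y i))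

/-- The hybrid trajectory `X` built from the modes: `X t = x i t` on `[i-1, i)` and
`X T = g (x T T) (y T)`. -/
def IsHybridTraj {nx ny : ℕ} (T : ℕ) (g : EucSp nx → EucSp ny → EucSp nx)
    (y : ℕ → EucSp ny) (x : ℕ → ℝ → EucSp nx) (X : ℝ → EucSp nx) : Prop :=
  (∀ i : ℕ, 1 ≤ i → i ≤ T → ∀ t ∈ Set.Ico ((i : ℝ) - 1) (i : ℝ), X t = x i t) ∧
    X (T : ℝ) = g (x T (T : ℝ)) (y T)

/-- The perturbed control: equal to `v` on `(τ - ε, τ]` and to `u` elsewhere. -/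
def perturb {m : ℕ} (u : ℝ → EucSp m) (τ : ℝ) (v : EucSp m) (ε : ℝ) : ℝ → EucSp m :=
  fun t => if τ - ε < t ∧ t ≤ τ then v else u t

theorem norm_le_gronwallBound_of_eq_add_integral {E : Type*} [NormedAddCommGroup E]
    [NormedSpace ℝ E] {x F : ℝ → E} {a b K ε : ℝ} (hab : a ≤ b)
    (hx : ContinuousOn x (Icc a b)) (hxF : ∀ t ∈ Icc a b, x t = x a + ∫ s in a..t, F s)
    (hK : 0 ≤ K) (bound : ∀ s ∈ Icc a b, ‖F s‖ ≤ K * ‖x s‖ + ε) :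
    ∀ t ∈ Icc a b, ‖x t‖ ≤ gronwallBound ‖x a‖ K ε (t - a) := by
  -- `x` need not be differentiable (`F` need not be continuous), so Grönwall's
  -- inequality is applied to the `C¹` majorant `φ` instead.
  set w : ℝ → ℝ := fun s => K * ‖x (projIcc a b hab s)‖ + ε
  have hx' : Continuous fun s => x (projIcc a b hab s) :=
    hx.comp_continuous (by fun_prop) fun s => (projIcc a b hab s).2
  have hw : Continuous w := (continuous_const.mul hx'.norm).add continuous_const
  have hw_eq : ∀ s ∈ Icc a b, w s = K * ‖x s‖ + ε := fun s hs => by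
    simp only [w, projIcc_of_mem hab hs]
  set φ : ℝ → ℝ := fun t => ‖x a‖ + ∫ s in a..t, w s
  have hφ : ∀ t, HasDerivAt φ (w t) t := fun t =>
    (hw.integral_hasStrictDerivAt a t).hasDerivAt.const_add _
  have hxφ : ∀ t ∈ Icc a b, ‖x t‖ ≤ φ t := by
    intro t ht
    rw [hxF t ht]
    refine (norm_add_le _ _).trans (add_le_add_right ?_ _)
    refine intervalIntegral.norm_integral_le_of_norm_le ht.1
      (ae_of_all _ fun s hs => ?_) (hw.intervalIntegrable _ _)
    have hs' : s ∈ Icc a b := ⟨hs.1.le, hs.2.trans ht.2⟩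
    exact (bound s hs').trans_eq (hw_eq s hs').symm
  have hφ_le : ∀ t ∈ Icc a b, φ t ≤ gronwallBound ‖x a‖ K ε (t - a) :=
    le_gronwallBound_of_liminf_deriv_right_le (f' := w)
      (fun t _ => (hφ t).continuousAt.continuousWithinAt)
      (fun t _ r hr => by
        simpa [slope_def_field, div_eq_inv_mul] using
          (hφ t).hasDerivWithinAt.liminf_right_slope_le hr)
      (by simp [φ])
      (fun t ht => by
        rw [hw_eq t (Ico_subset_Icc_self ht)]
        gcongr
        exact hxφ t (Ico_subset_Icc_self ht))
  exact fun t ht => (hxφ t ht).trans (hφ_le t ht)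

lemma gronwallBound_nonneg {δ K ε x : ℝ} (hδ : 0 ≤ δ) (hK : 0 ≤ K) (hε : 0 ≤ ε) (hx : 0 ≤ x) :
    0 ≤ gronwallBound δ K ε x :=
  hδ.trans (by simpa [gronwallBound_x0] using gronwallBound_mono hδ hε hK hx)

lemma gronwallBound_eq_add (δ K ε x : ℝ) :
    gronwallBound δ K ε x = δ * Real.exp (K * x) + gronwallBound 0 K ε x := by
  unfold gronwallBound
  split_ifs with hK <;> simp [hK]

lemma gronwallBound_le_mul {δ α W K ε x : ℝ} (hδα : δ ≤ α * W) (hW : 1 ≤ W) (hK : 0 ≤ K)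
    (hε : 0 ≤ ε) (hx : 0 ≤ x) : gronwallBound δ K ε x ≤ gronwallBound α K ε x * W := by
  have h₀ : 0 ≤ gronwallBound 0 K ε x := gronwallBound_nonneg le_rfl hK hε hx
  rw [gronwallBound_eq_add δ, gronwallBound_eq_add α]
  have hδ : δ * Real.exp (K * x) ≤ α * W * Real.exp (K * x) := by gcongr
  nlinarith [le_mul_of_one_le_right h₀ hW]

lemma norm_le_of_lipschitz {E F G : Type*} [SeminormedAddCommGroup E]
    [SeminormedAddCommGroup F] [SeminormedAddCommGroup G] {f : E → F → G} {ρ K : ℝ}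
    (hLip : ∀ (x' x'' : E) (u' u'' : F), ‖u'‖ ≤ ρ → ‖u''‖ ≤ ρ →
      ‖f x' u' - f x'' u''‖ ≤ K * (‖x' - x''‖ + ‖u' - u''‖))
    (hK : 0 ≤ K) {z : E} {v : F} (hv : ‖v‖ ≤ ρ) :
    ‖f z v‖ ≤ K * ‖z‖ + (‖f 0 0‖ + K * ρ) := by
  have h := hLip z 0 v 0 hv (by simpa using (norm_nonneg v).trans hv)
  simp only [sub_zero] at h
  have := norm_sub_norm_le (f z v) (f 0 0)
  nlinarith

lemma add_mul_pow_le_mul_pow {β γ α W r : ℝ} {N L : ℕ} (hβ : 0 ≤ β) (hγ : 0 ≤ γ)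
    (hW : 1 ≤ W) (hr : 0 ≤ r) (hrα : r ≤ α * W ^ N) :
    β + γ * r ^ L ≤ (β + γ * α ^ L) * W ^ (N * L) := by
  calc β + γ * r ^ L ≤ β * W ^ (N * L) + γ * (α * W ^ N) ^ L := by
        gcongr
        exact le_mul_of_one_le_right hβ (one_le_pow₀ hW)
    _ = _ := by ring

lemma jump_growth_le_mul_pow {K₂ K₃ K₄ K₅ α W r s : ℝ} {N L₁ L₂ : ℕ} (hK₂ : 0 ≤ K₂)
    (hK₃ : 0 ≤ K₃) (hK₄ : 0 ≤ K₄) (hK₅ : 0 ≤ K₅) (hα : 0 ≤ α) (hW : 1 ≤ W) (hr : 0 ≤ r)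
    (hrα : r ≤ α * W ^ N) (hs : 0 ≤ s) :
    K₂ + K₃ * r ^ L₁ + K₄ * s ^ L₂ + K₅ * r ^ L₁ * s ^ L₂ ≤
      (K₂ + K₃ * α ^ L₁ + K₄ + K₅ * α ^ L₁) * (W * (1 + s)) ^ max (N * L₁) L₂ := by
  have hs1 : 1 ≤ 1 + s := by linarith
  have hQ : W ^ (N * L₁) * (1 + s) ^ L₂ ≤ (W * (1 + s)) ^ max (N * L₁) L₂ := by
    rw [mul_pow]
    gcongr
    exacts [le_max_left _ _, le_max_right _ _]
  set Q := (W * (1 + s)) ^ max (N * L₁) L₂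
  have hW₁ : 1 ≤ W ^ (N * L₁) := one_le_pow₀ hW
  have hs₁ : 1 ≤ (1 + s) ^ L₂ := one_le_pow₀ hs1
  have hr' : r ^ L₁ ≤ α ^ L₁ * W ^ (N * L₁) := by
    rw [pow_mul, ← mul_pow]
    gcongr
  have hs' : s ^ L₂ ≤ (1 + s) ^ L₂ := by gcongr; linarith
  have hαL : 0 ≤ α ^ L₁ := by positivity
  have h₂ : 1 ≤ Q := by nlinarith
  have h₃ : r ^ L₁ ≤ α ^ L₁ * Q := hr'.trans (by gcongr; nlinarith)
  have h₄ : s ^ L₂ ≤ Q := hs'.trans (by nlinarith)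
  have h₅ : r ^ L₁ * s ^ L₂ ≤ α ^ L₁ * Q :=
    calc r ^ L₁ * s ^ L₂ ≤ α ^ L₁ * W ^ (N * L₁) * (1 + s) ^ L₂ := by gcongr
      _ ≤ α ^ L₁ * Q := by rw [mul_assoc]; gcongr
  calc K₂ + K₃ * r ^ L₁ + K₄ * s ^ L₂ + K₅ * r ^ L₁ * s ^ L₂
      = K₂ + K₃ * r ^ L₁ + K₄ * s ^ L₂ + K₅ * (r ^ L₁ * s ^ L₂) := by ring
    _ ≤ K₂ * Q + K₃ * (α ^ L₁ * Q) + K₄ * Q + K₅ * (α ^ L₁ * Q) := by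
        gcongr
        exact le_mul_of_one_le_right hK₂ h₂
    _ = _ := by ring

theorem exists_monomial_bound {ι : Type*} (s : Finset ι) (N : ℕ) (α : ℝ) :
    ∃ K : List ((ι → ℕ) × ℝ), (∀ p ∈ K, 0 < p.2) ∧ ∀ a : ι → ℝ, (∀ k, 0 ≤ a k) →
      α * (∏ k ∈ s, (1 + a k)) ^ N ≤ (K.map fun p => p.2 * ∏ k ∈ s, a k ^ p.1 k).sum := by
  classical
  set β := max α 1 * 2 ^ ((N - 1) * s.card)
  refine ⟨s.powerset.toList.map fun t => (fun k => if k ∈ t then N else 0, β), ?_, ?_⟩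
  · simp only [List.mem_map, forall_exists_index, and_imp]
    rintro _ t - rfl
    positivity
  intro a ha
  have hterm : ∀ k, (1 + a k) ^ N ≤ 2 ^ (N - 1) * (1 + a k ^ N) := fun k => by
    simpa using add_pow_le zero_le_one (ha k) N
  calc α * (∏ k ∈ s, (1 + a k)) ^ N ≤ max α 1 * ∏ k ∈ s, (1 + a k) ^ N := by
        rw [Finset.prod_pow]
        gcongr
        · exact pow_nonneg (Finset.prod_nonneg fun k _ => by linarith [ha k]) _
        · exact le_max_left _ _
    _ ≤ max α 1 * ∏ k ∈ s, (2 ^ (N - 1) * (1 + a k ^ N)) := by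
        gcongr with k
        · exact fun k _ => pow_nonneg (by linarith [ha k]) _
        · exact hterm k
    _ = ∑ t ∈ s.powerset, β * ∏ k ∈ t, a k ^ N := by
        rw [Finset.prod_mul_distrib, Finset.prod_const, Finset.prod_one_add, ← Finset.mul_sum,
          ← pow_mul]
        ring
    _ = _ := by
        rw [List.map_map, Finset.sum_map_toList]
        refine Finset.sum_congr rfl fun t ht => ?_
        simp only [Function.comp_apply, pow_ite, pow_zero]
        rw [Finset.prod_ite_mem, Finset.inter_eq_right.2 (Finset.mem_powerset.1 ht)]

lemma one_le_prod_one_add_norm {E : Type*} [SeminormedAddCommGroup E] (s : Finset ℕ)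
    (y : ℕ → E) : 1 ≤ ∏ k ∈ s, (1 + ‖y k‖) :=
  Finset.one_le_prod fun _ _ => le_add_of_nonneg_right (norm_nonneg _)

lemma norm_jump_le {E F : Type*} [SeminormedAddCommGroup E] [SeminormedAddCommGroup F]
    {g : E → F → E} {K₂ K₃ K₄ K₅ α : ℝ} {L₁ L₂ N j : ℕ}
    (hgb : ∀ (z : E) (yy : F),
      ‖g z yy‖ ≤ K₂ + K₃ * ‖z‖ ^ L₁ + K₄ * ‖yy‖ ^ L₂ + K₅ * ‖z‖ ^ L₁ * ‖yy‖ ^ L₂)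
    (hK₂ : 0 ≤ K₂) (hK₃ : 0 ≤ K₃) (hK₄ : 0 ≤ K₄) (hK₅ : 0 ≤ K₅) (hα : 0 ≤ α)
    {z : E} {y : ℕ → F} (hz : ‖z‖ ≤ α * (∏ k ∈ Finset.Icc 1 j, (1 + ‖y k‖)) ^ N) :
    ‖g z (y (j + 1))‖ ≤ (K₂ + K₃ * α ^ L₁ + K₄ + K₅ * α ^ L₁) *
      (∏ k ∈ Finset.Icc 1 (j + 1), (1 + ‖y k‖)) ^ max (N * L₁) L₂ := by
  rw [Finset.prod_Icc_succ_top (by omega)]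
  exact (hgb _ _).trans (jump_growth_le_mul_pow hK₂ hK₃ hK₄ hK₅ hα (one_le_prod_one_add_norm _ y)
    (norm_nonneg _) hz (norm_nonneg _))

section HybridSystem

variable {nx ny m T : ℕ} {ρmax K₁ K₂ K₃ K₄ K₅ K₆ K₇ : ℝ} {L₁ L₂ L₃ : ℕ}
  {f : EucSp nx → EucSp m → EucSp nx} {g : EucSp nx → EucSp ny → EucSp nx}

lemma HybridModes.norm_le_gronwallBound {u : ℝ → EucSp m} {y : ℕ → EucSp ny} {x₀ : EucSp nx}
    {x : ℕ → ℝ → EucSp nx} (hx : HybridModes T f g u y x₀ x) (hu : AdmissibleCtrl T ρmax u)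
    (hLip : ∀ (x' x'' : EucSp nx) (u' u'' : EucSp m), ‖u'‖ ≤ ρmax → ‖u''‖ ≤ ρmax →
      ‖f x' u' - f x'' u''‖ ≤ K₁ * (‖x' - x''‖ + ‖u' - u''‖))
    (hρ : 0 ≤ ρmax) (hK₁ : 0 ≤ K₁) {j : ℕ} (hj : j + 1 ≤ T) :
    ∀ t ∈ Icc (j : ℝ) (j + 1),
      ‖x (j + 1) t‖ ≤ gronwallBound ‖x (j + 1) j‖ K₁ (‖f 0 0‖ + K₁ * ρmax) 1 := by
  have hsub : Icc (j : ℝ) (j + 1) ⊆ Icc 0 T :=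
    Icc_subset_Icc (Nat.cast_nonneg j) (by exact_mod_cast hj)
  have hsol : IsSolOn f u j (j + 1) (x (j + 1)) := by
    simpa using hx.2.1 (j + 1) (by omega) hj
  intro t ht
  calc ‖x (j + 1) t‖ ≤ gronwallBound ‖x (j + 1) j‖ K₁ (‖f 0 0‖ + K₁ * ρmax) (t - j) :=
        norm_le_gronwallBound_of_eq_add_integral (by linarith) hsol.1 hsol.2 hK₁
          (fun s hs => norm_le_of_lipschitz hLip hK₁ (hu.2 s (hsub hs))) t ht
    _ ≤ _ := gronwallBound_mono (norm_nonneg _) (by positivity) hK₁ (by linarith [ht.2])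

theorem exists_norm_mode_le (hLip : ∀ (x' x'' : EucSp nx) (u' u'' : EucSp m),
      ‖u'‖ ≤ ρmax → ‖u''‖ ≤ ρmax → ‖f x' u' - f x'' u''‖ ≤ K₁ * (‖x' - x''‖ + ‖u' - u''‖))
    (hgb : ∀ (z : EucSp nx) (yy : EucSp ny),
      ‖g z yy‖ ≤ K₂ + K₃ * ‖z‖ ^ L₁ + K₄ * ‖yy‖ ^ L₂ + K₅ * ‖z‖ ^ L₁ * ‖yy‖ ^ L₂)
    (hρ : 0 ≤ ρmax) (hK₁ : 0 ≤ K₁) (hK₂ : 0 ≤ K₂) (hK₃ : 0 ≤ K₃) (hK₄ : 0 ≤ K₄)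
    (hK₅ : 0 ≤ K₅) (x₀ : EucSp nx) :
    ∀ j, j + 1 ≤ T → ∃ α, 0 ≤ α ∧ ∃ N : ℕ,
      ∀ u, AdmissibleCtrl T ρmax u → ∀ y x, HybridModes T f g u y x₀ x →
      ∀ t ∈ Icc (j : ℝ) (j + 1), ‖x (j + 1) t‖ ≤ α * (∏ k ∈ Finset.Icc 1 j, (1 + ‖y k‖)) ^ N := by
  have hε : 0 ≤ ‖f 0 0‖ + K₁ * ρmax := by positivity
  intro j
  induction j with
  | zero =>
    refine fun hT => ⟨_, gronwallBound_nonneg (norm_nonneg x₀) hK₁ hε zero_le_one, 0,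
      fun u hu y x hx t ht => ?_⟩
    simpa [hx.1] using hx.norm_le_gronwallBound hu hLip hρ hK₁ hT t (by simpa using ht)
  | succ j ih =>
    intro hj
    obtain ⟨α, hα, N, hmode⟩ := ih (by omega)
    have hA : 0 ≤ K₂ + K₃ * α ^ L₁ + K₄ + K₅ * α ^ L₁ := by positivity
    refine ⟨_, gronwallBound_nonneg hA hK₁ hε zero_le_one, max (N * L₁) L₂,
      fun u hu y x hx t ht => ?_⟩
    have hjump := norm_jump_le hgb hK₂ hK₃ hK₄ hK₅ hα
      (hmode u hu y x hx (j + 1 : ℕ) ⟨by simp, by simp⟩)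
    rw [← hx.2.2 (j + 1) (by omega) hj] at hjump
    exact (hx.norm_le_gronwallBound hu hLip hρ hK₁ hj t ht).trans
      (gronwallBound_le_mul hjump (one_le_pow₀ (one_le_prod_one_add_norm _ y)) hK₁ hε zero_le_one)

theorem exists_cost_le {c : EucSp nx → EucSp m → ℝ}
    (hLip : ∀ (x' x'' : EucSp nx) (u' u'' : EucSp m), ‖u'‖ ≤ ρmax → ‖u''‖ ≤ ρmax →
      ‖f x' u' - f x'' u''‖ ≤ K₁ * (‖x' - x''‖ + ‖u' - u''‖))
    (hgb : ∀ (z : EucSp nx) (yy : EucSp ny),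
      ‖g z yy‖ ≤ K₂ + K₃ * ‖z‖ ^ L₁ + K₄ * ‖yy‖ ^ L₂ + K₅ * ‖z‖ ^ L₁ * ‖yy‖ ^ L₂)
    (hc : ∀ (z : EucSp nx) (uu : EucSp m), ‖uu‖ ≤ ρmax → |c z uu| ≤ K₆ + K₇ * ‖z‖ ^ L₃)
    (hρ : 0 ≤ ρmax) (hK₁ : 0 ≤ K₁) (hK₂ : 0 ≤ K₂) (hK₃ : 0 ≤ K₃) (hK₄ : 0 ≤ K₄)
    (hK₅ : 0 ≤ K₅) (hK₆ : 0 ≤ K₆) (hK₇ : 0 ≤ K₇) (x₀ : EucSp nx) {j : ℕ} (hj : j + 1 ≤ T) :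
    ∃ γ : ℝ, ∃ N : ℕ, ∀ u, AdmissibleCtrl T ρmax u → ∀ y x, HybridModes T f g u y x₀ x →
      ∀ t ∈ Icc (j : ℝ) (j + 1),
        |c (x (j + 1) t) (u t)| ≤ γ * (∏ k ∈ Finset.Icc 1 j, (1 + ‖y k‖)) ^ N := by
  obtain ⟨α, -, N, hmode⟩ := exists_norm_mode_le hLip hgb hρ hK₁ hK₂ hK₃ hK₄ hK₅ x₀ j hj
  refine ⟨K₆ + K₇ * α ^ L₃, N * L₃, fun u hu y x hx t ht => ?_⟩
  have hut : ‖u t‖ ≤ ρmax :=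
    hu.2 t ⟨(Nat.cast_nonneg j).trans ht.1, ht.2.trans (by exact_mod_cast hj)⟩
  exact (hc _ _ hut).trans (add_mul_pow_le_mul_pow hK₆ hK₇ (one_le_prod_one_add_norm _ y)
    (norm_nonneg _) (hmode u hu y x hx t ht))

theorem exists_terminal_cost_le {h : EucSp nx → ℝ}
    (hLip : ∀ (x' x'' : EucSp nx) (u' u'' : EucSp m), ‖u'‖ ≤ ρmax → ‖u''‖ ≤ ρmax →
      ‖f x' u' - f x'' u''‖ ≤ K₁ * (‖x' - x''‖ + ‖u' - u''‖))
    (hgb : ∀ (z : EucSp nx) (yy : EucSp ny),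
      ‖g z yy‖ ≤ K₂ + K₃ * ‖z‖ ^ L₁ + K₄ * ‖yy‖ ^ L₂ + K₅ * ‖z‖ ^ L₁ * ‖yy‖ ^ L₂)
    (hh : ∀ z : EucSp nx, |h z| ≤ K₆ + K₇ * ‖z‖ ^ L₃) (hT : 0 < T)
    (hρ : 0 ≤ ρmax) (hK₁ : 0 ≤ K₁) (hK₂ : 0 ≤ K₂) (hK₃ : 0 ≤ K₃) (hK₄ : 0 ≤ K₄)
    (hK₅ : 0 ≤ K₅) (hK₆ : 0 ≤ K₆) (hK₇ : 0 ≤ K₇) (x₀ : EucSp nx) :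
    ∃ γ : ℝ, ∃ N : ℕ, ∀ u, AdmissibleCtrl T ρmax u → ∀ y x X, HybridModes T f g u y x₀ x →
      IsHybridTraj T g y x X → |h (X T)| ≤ γ * (∏ k ∈ Finset.Icc 1 T, (1 + ‖y k‖)) ^ N := by
  obtain ⟨j, rfl⟩ : ∃ j, T = j + 1 := ⟨T - 1, by omega⟩
  obtain ⟨α, hα, N, hmode⟩ := exists_norm_mode_le hLip hgb hρ hK₁ hK₂ hK₃ hK₄ hK₅ x₀ j le_rfl
  refine ⟨K₆ + K₇ * (K₂ + K₃ * α ^ L₁ + K₄ + K₅ * α ^ L₁) ^ L₃, max (N * L₁) L₂ * L₃,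
    fun u hu y x X hx hX => (hh _).trans
    (add_mul_pow_le_mul_pow hK₆ hK₇ (one_le_prod_one_add_norm _ y) (norm_nonneg _) ?_)⟩
  rw [hX.2]
  exact norm_jump_le hgb hK₂ hK₃ hK₄ hK₅ hα (hmode u hu y x hx _ ⟨by simp, by simp⟩)

end HybridSystem

theorem bounded_cost_functions_general {nx ny m : ℕ} (T : ℕ) (hT : 0 < T)
    (ρmax K₁ : ℝ) (hK₁ : 1 ≤ K₁)
    (K₂ K₃ K₄ K₅ : ℝ) (hK₂ : 0 ≤ K₂) (hK₃ : 0 ≤ K₃) (hK₄ : 0 ≤ K₄) (hK₅ : 0 ≤ K₅)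
    (L₁ L₂ : ℕ)
    (K₆ K₇ : ℝ) (hK₆ : 0 ≤ K₆) (hK₇ : 0 ≤ K₇) (L₃ : ℕ)
    (f : EucSp nx → EucSp m → EucSp nx)
    (hLip : ∀ (x' x'' : EucSp nx) (u' u'' : EucSp m), ‖u'‖ ≤ ρmax → ‖u''‖ ≤ ρmax →
      ‖f x' u' - f x'' u''‖ ≤ K₁ * (‖x' - x''‖ + ‖u' - u''‖))
    (g : EucSp nx → EucSp ny → EucSp nx)
    (hgb : ∀ (z : EucSp nx) (yy : EucSp ny),
      ‖g z yy‖ ≤ K₂ + K₃ * ‖z‖ ^ L₁ + K₄ * ‖yy‖ ^ L₂ + K₅ * ‖z‖ ^ L₁ * ‖yy‖ ^ L₂ ∧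
      ‖fderiv ℝ (fun w => g w yy) z‖ ≤
        K₂ + K₃ * ‖z‖ ^ L₁ + K₄ * ‖yy‖ ^ L₂ + K₅ * ‖z‖ ^ L₁ * ‖yy‖ ^ L₂)
    (c : EucSp nx → EucSp m → ℝ)
    (h : EucSp nx → ℝ)
    (hcb : ∀ (z : EucSp nx) (uu : EucSp m), ‖uu‖ ≤ ρmax →
      |c z uu| ≤ K₆ + K₇ * ‖z‖ ^ L₃ ∧
      ‖fderiv ℝ (fun w => c w uu) z‖ ≤ K₆ + K₇ * ‖z‖ ^ L₃ ∧
      |h z| ≤ K₆ + K₇ * ‖z‖ ^ L₃ ∧ ‖fderiv ℝ h z‖ ≤ K₆ + K₇ * ‖z‖ ^ L₃)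
    (x₀ : EucSp nx) :
    (∃ α₁ : ℝ, 0 < α₁ ∧
      ∀ u : ℝ → EucSp m, AdmissibleCtrl (T : ℝ) ρmax u →
      ∀ (y : ℕ → EucSp ny) (x : ℕ → ℝ → EucSp nx), HybridModes T f g u y x₀ x →
      ∀ t ∈ Set.Icc (0 : ℝ) 1, |c (x 1 t) (u t)| ≤ α₁) ∧
    (∀ i : ℕ, 2 ≤ i → i ≤ T →
      ∃ K : List ((ℕ → ℕ) × ℝ), (∀ p ∈ K, 0 < p.2) ∧
        ∀ u : ℝ → EucSp m, AdmissibleCtrl (T : ℝ) ρmax u →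
        ∀ (y : ℕ → EucSp ny) (x : ℕ → ℝ → EucSp nx), HybridModes T f g u y x₀ x →
        ∀ t ∈ Set.Icc ((i : ℝ) - 1) (i : ℝ),
          |c (x i t) (u t)| ≤
            (K.map fun p => p.2 * ∏ mm ∈ Finset.Icc 1 (i - 1), ‖y mm‖ ^ p.1 mm).sum) ∧
    ∃ K : List ((ℕ → ℕ) × ℝ), (∀ p ∈ K, 0 < p.2) ∧
      ∀ u : ℝ → EucSp m, AdmissibleCtrl (T : ℝ) ρmax u →
      ∀ (y : ℕ → EucSp ny) (x : ℕ → ℝ → EucSp nx) (X : ℝ → EucSp nx),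
        HybridModes T f g u y x₀ x → IsHybridTraj T g y x X →
        |h (X (T : ℝ))| ≤
          (K.map fun p => p.2 * ∏ mm ∈ Finset.Icc 1 T, ‖y mm‖ ^ p.1 mm).sum := by
  rcases lt_or_ge ρmax 0 with hρ | hρ
  · have hU : ∀ u : ℝ → EucSp m, ¬ AdmissibleCtrl (T : ℝ) ρmax u := fun u hu =>
      hρ.not_ge ((norm_nonneg _).trans (hu.2 0 ⟨le_rfl, Nat.cast_nonneg T⟩))
    exact ⟨⟨1, one_pos, fun u hu => (hU u hu).elim⟩,
      fun _ _ _ => ⟨[], by simp, fun u hu => (hU u hu).elim⟩, [], by simp,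
      fun u hu => (hU u hu).elim⟩
  have hg_bound := fun z yy => (hgb z yy).1
  have hc_bound := fun z uu huu => (hcb z uu huu).1
  have hh_bound := fun z => (hcb z 0 (by simpa using hρ)).2.2.1
  have hK₁' : 0 ≤ K₁ := by linarith
  refine ⟨?_, fun i hi hiT => ?_, ?_⟩
  · obtain ⟨γ, N, hγ⟩ := exists_cost_le hLip hg_bound hc_bound hρ hK₁' hK₂ hK₃ hK₄ hK₅
      hK₆ hK₇ x₀ (j := 0) hT
    exact ⟨max γ 1, by positivity, fun u hu y x hx t ht =>
      (hγ u hu y x hx t (by simpa using ht)).trans (by simp)⟩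
  · obtain ⟨j, rfl⟩ : ∃ j, i = j + 1 := ⟨i - 1, by omega⟩
    obtain ⟨γ, N, hγ⟩ := exists_cost_le hLip hg_bound hc_bound hρ hK₁' hK₂ hK₃ hK₄ hK₅
      hK₆ hK₇ x₀ hiT
    obtain ⟨K, hK_pos, hK⟩ := exists_monomial_bound (Finset.Icc 1 j) N γ
    exact ⟨K, hK_pos, fun u hu y x hx t ht => (hγ u hu y x hx t (by simpa using ht)).trans
      (by simpa using hK (fun k => ‖y k‖) fun k => norm_nonneg _)⟩
  · obtain ⟨γ, N, hγ⟩ := exists_terminal_cost_le hLip hg_bound hh_bound hT hρ hK₁' hK₂ hK₃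
      hK₄ hK₅ hK₆ hK₇ x₀
    obtain ⟨K, hK_pos, hK⟩ := exists_monomial_bound (Finset.Icc 1 T) N γ
    exact ⟨K, hK_pos, fun u hu y x X hx hX =>
      (hγ u hu y x X hx hX).trans (hK _ fun k => norm_nonneg (y k))⟩

/-- Bounded cost functions, Proposition 9: the instantaneous cost along the
hybrid trajectory and the terminal cost are bounded by polynomials in the observation
norms, with constants independent of the control and the observations. -/
theorem bounded_cost_functions {nx ny m : ℕ} (T : ℕ) (hT : 0 < T)
    (ρmax K₁ : ℝ) (hK₁ : 1 ≤ K₁)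
    (K₂ K₃ K₄ K₅ : ℝ) (hK₂ : 0 ≤ K₂) (hK₃ : 0 ≤ K₃) (hK₄ : 0 ≤ K₄) (hK₅ : 0 ≤ K₅)
    (L₁ L₂ : ℕ) (hL₁ : 0 < L₁) (hL₂ : 0 < L₂)
    (K₆ K₇ : ℝ) (hK₆ : 0 ≤ K₆) (hK₇ : 0 ≤ K₇) (L₃ : ℕ) (hL₃ : 0 < L₃)
    (f : EucSp nx → EucSp m → EucSp nx)
    (hf : ContDiff ℝ 1 fun p : EucSp nx × EucSp m => f p.1 p.2)
    (hLip : ∀ (x' x'' : EucSp nx) (u' u'' : EucSp m), ‖u'‖ ≤ ρmax → ‖u''‖ ≤ ρmax →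
      ‖f x' u' - f x'' u''‖ ≤ K₁ * (‖x' - x''‖ + ‖u' - u''‖))
    (g : EucSp nx → EucSp ny → EucSp nx)
    (hgc : Continuous fun p : EucSp nx × EucSp ny => g p.1 p.2)
    (hgd : ∀ yy : EucSp ny, Differentiable ℝ fun z => g z yy)
    (hgb : ∀ (z : EucSp nx) (yy : EucSp ny),
      ‖g z yy‖ ≤ K₂ + K₃ * ‖z‖ ^ L₁ + K₄ * ‖yy‖ ^ L₂ + K₅ * ‖z‖ ^ L₁ * ‖yy‖ ^ L₂ ∧
      ‖fderiv ℝ (fun w => g w yy) z‖ ≤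
        K₂ + K₃ * ‖z‖ ^ L₁ + K₄ * ‖yy‖ ^ L₂ + K₅ * ‖z‖ ^ L₁ * ‖yy‖ ^ L₂)
    (c : EucSp nx → EucSp m → ℝ)
    (hcc : Continuous fun p : EucSp nx × EucSp m => c p.1 p.2)
    (hcx : ∀ uu : EucSp m, ContDiff ℝ 1 fun z => c z uu)
    (h : EucSp nx → ℝ) (hh : Differentiable ℝ h)
    (hcb : ∀ (z : EucSp nx) (uu : EucSp m), ‖uu‖ ≤ ρmax →
      |c z uu| ≤ K₆ + K₇ * ‖z‖ ^ L₃ ∧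
      ‖fderiv ℝ (fun w => c w uu) z‖ ≤ K₆ + K₇ * ‖z‖ ^ L₃ ∧
      |h z| ≤ K₆ + K₇ * ‖z‖ ^ L₃ ∧ ‖fderiv ℝ h z‖ ≤ K₆ + K₇ * ‖z‖ ^ L₃)
    (x₀ : EucSp nx) :
    (∃ α₁ : ℝ, 0 < α₁ ∧
      ∀ u : ℝ → EucSp m, AdmissibleCtrl (T : ℝ) ρmax u →
      ∀ (y : ℕ → EucSp ny) (x : ℕ → ℝ → EucSp nx), HybridModes T f g u y x₀ x →
      ∀ t ∈ Set.Icc (0 : ℝ) 1, |c (x 1 t) (u t)| ≤ α₁) ∧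
    (∀ i : ℕ, 2 ≤ i → i ≤ T →
      ∃ K : List ((ℕ → ℕ) × ℝ), (∀ p ∈ K, 0 < p.2) ∧
        ∀ u : ℝ → EucSp m, AdmissibleCtrl (T : ℝ) ρmax u →
        ∀ (y : ℕ → EucSp ny) (x : ℕ → ℝ → EucSp nx), HybridModes T f g u y x₀ x →
        ∀ t ∈ Set.Icc ((i : ℝ) - 1) (i : ℝ),
          |c (x i t) (u t)| ≤
            (K.map fun p => p.2 * ∏ mm ∈ Finset.Icc 1 (i - 1), ‖y mm‖ ^ p.1 mm).sum) ∧
    ∃ K : List ((ℕ → ℕ) × ℝ), (∀ p ∈ K, 0 < p.2) ∧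
      ∀ u : ℝ → EucSp m, AdmissibleCtrl (T : ℝ) ρmax u →
      ∀ (y : ℕ → EucSp ny) (x : ℕ → ℝ → EucSp nx) (X : ℝ → EucSp nx),
        HybridModes T f g u y x₀ x → IsHybridTraj T g y x X →
        |h (X (T : ℝ))| ≤
          (K.map fun p => p.2 * ∏ mm ∈ Finset.Icc 1 T, ‖y mm‖ ^ p.1 mm).sum :=
  bounded_cost_functions_general T hT ρmax K₁ hK₁ K₂ K₃ K₄ K₅ hK₂ hK₃ hK₄ hK₅ L₁ L₂ K₆ K₇ hK₆ hK₇ L₃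
    f hLip g hgb c h hcb x₀
end
end

section
/- Let u ∈ U, τ ∈ (0,1), v ∈ B(0,ρ_max), and let u^ε be the perturbed control equal to v on (τ−ε, τ] and to u elsewhere. Let x₁ and x₁^ε be the solutions on [0,1] of ẋ = f(x,u) and ẋ = f(x,u^ε) starting at x₀. Then lim_{ε→0⁺} (1/ε) ∫_{τ−ε}^{τ} { f(x₁^ε(t), u^ε(t)) − f(x₁(t), u(t)) } dt = f(x₁(τ), v) − f(x₁(τ), u(τ)). -/
/-!
Since `u^ε` differs from `u` only on a set of measure `ε`, the integral form of Grönwall's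
inequality gives `‖x₁^ε - x₁‖ = O(ε)` uniformly on `[0, 1]`. Hence, as `ε → 0⁺` with `t` in the
window `(τ - ε, τ]`, we have `u^ε(t) = v`, `x₁^ε(t) → x₁(τ)` and, by left continuity,
`u(t) → u(τ)`; so the integrand tends to `f(x₁(τ), v) - f(x₁(τ), u(τ))` uniformly on the window,
and so does its average over the window.
-/

open Set MeasureTheory Filter Topology

noncomputable section

open scoped Classical

open Real Interval

theorem le_mul_exp_of_le_mul_integral_add {δ : ℝ → ℝ} {a b K B : ℝ}
    (hδ : ContinuousOn δ (Icc a b)) (hδ0 : ∀ t ∈ Icc a b, 0 ≤ δ t) (hK : 0 ≤ K)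
    (h : ∀ t ∈ Icc a b, δ t ≤ K * (∫ s in a..t, δ s) + B) :
    ∀ t ∈ Icc a b, δ t ≤ B * exp (K * (t - a)) := by
  intro t ht
  have hab : a ≤ b := ht.1.trans ht.2
  -- extend `δ` continuously to `ℝ` so that `∫ a..t` has derivative `δ t` everywhere
  set δ' : ℝ → ℝ := fun s => δ (projIcc a b hab s)
  have hδ' : Continuous δ' :=
    hδ.comp_continuous (continuous_subtype_val.comp continuous_projIcc) fun s => Subtype.prop _
  have hδδ' : EqOn δ' δ (Icc a b) := fun s hs => by simp [δ', projIcc_of_mem hab hs]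
  -- `H` dominates `δ` on `[a, b]`, `H a = B` and `H' = K δ ≤ K H` there
  set H : ℝ → ℝ := fun s => K * (∫ r in a..s, δ' r) + B
  have hH : ∀ s, HasDerivAt H (K * δ' s) s := fun s =>
    ((hδ'.integral_hasStrictDerivAt a s).hasDerivAt.const_mul K).add_const B
  have hδH : ∀ s ∈ Icc a b, δ s ≤ H s := fun s hs => by
    have : ∫ r in a..s, δ' r = ∫ r in a..s, δ r := intervalIntegral.integral_congr
      (hδδ'.mono (by rw [uIcc_of_le hs.1]; exact Icc_subset_Icc_right hs.2))
    simpa only [H, this] using h s hs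
  have hB : 0 ≤ B := by
    simpa using (hδ0 a (left_mem_Icc.2 hab)).trans (h a (left_mem_Icc.2 hab))
  have hgron := norm_le_gronwallBound_of_norm_deriv_right_le (f := H) (δ := B) (ε := 0)
    (fun s _ => (hH s).continuousAt.continuousWithinAt) (fun s _ => (hH s).hasDerivWithinAt)
    (by simp [H, abs_of_nonneg hB]) (fun s hs => by
      rw [hδδ' (Ico_subset_Icc_self hs), norm_mul, Real.norm_of_nonneg hK,
        Real.norm_of_nonneg (hδ0 s (Ico_subset_Icc_self hs)), add_zero]
      exact mul_le_mul_of_nonneg_left ((hδH s (Ico_subset_Icc_self hs)).trans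
        (le_abs_self _)) hK) t ht
  rw [gronwallBound_ε0] at hgron
  exact (hδH t ht).trans ((le_abs_self _).trans hgron)

theorem norm_le_mul_exp_of_eq_integral {E : Type*} [NormedAddCommGroup E] [NormedSpace ℝ E]
    {z g : ℝ → E} {h : ℝ → ℝ} {a b K B : ℝ}
    (hg : IntervalIntegrable g volume a b) (hz : ∀ t ∈ Icc a b, z t = ∫ s in a..t, g s)
    (hK : 0 ≤ K) (hgz : ∀ s ∈ Icc a b, ‖g s‖ ≤ K * ‖z s‖ + h s)
    (hh0 : 0 ≤ h) (hh : Integrable h) (hB : ∫ s, h s ≤ B) :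
    ∀ t ∈ Icc a b, ‖z t‖ ≤ B * exp (K * (t - a)) := by
  intro t ht
  have hab : a ≤ b := ht.1.trans ht.2
  have hzc : ContinuousOn (fun s => ‖z s‖) (Icc a b) := by
    refine (ContinuousOn.congr ?_ hz).norm
    simpa [uIcc_of_le hab] using intervalIntegral.continuousOn_primitive_interval' hg left_mem_uIcc
  refine le_mul_exp_of_le_mul_integral_add hzc (fun _ _ => norm_nonneg _) hK (fun s hs => ?_) t ht
  have hsub : Icc a s ⊆ Icc a b := Icc_subset_Icc_right hs.2
  have hzi : IntervalIntegrable (fun r => ‖z r‖) volume a s :=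
    (hzc.mono hsub).intervalIntegrable_of_Icc hs.1
  calc ‖z s‖ = ‖∫ r in a..s, g r‖ := by rw [hz s hs]
    _ ≤ ∫ r in a..s, ‖g r‖ := intervalIntegral.norm_integral_le_integral_norm hs.1
    _ ≤ ∫ r in a..s, (K * ‖z r‖ + h r) :=
        intervalIntegral.integral_mono_on hs.1
          (hg.mono_set (by simpa [uIcc_of_le hab, uIcc_of_le hs.1] using hsub)).norm
          ((hzi.const_mul K).add hh.intervalIntegrable) fun r hr => hgz r (hsub hr)
    _ = K * (∫ r in a..s, ‖z r‖) + ∫ r in a..s, h r := by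
        rw [intervalIntegral.integral_add (hzi.const_mul K) hh.intervalIntegrable,
          intervalIntegral.integral_const_mul]
    _ ≤ K * (∫ r in a..s, ‖z r‖) + B := by
        gcongr
        rw [intervalIntegral.integral_of_le hs.1]
        exact (setIntegral_le_integral hh (Eventually.of_forall hh0)).trans hB

theorem PiecewiseContinuousOn.aestronglyMeasurable {E : Type*} [TopologicalSpace E]
    [TopologicalSpace.PseudoMetrizableSpace E] {u : ℝ → E} {s : Set ℝ} {μ : Measure ℝ}
    [NullSingletonClass μ] (hu : PiecewiseContinuousOn u s) (hs : MeasurableSet s) :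
    AEStronglyMeasurable u (μ.restrict s) := by
  obtain ⟨D, hD⟩ := hu
  rw [← Measure.restrict_congr_set (sdiff_null_ae_eq_self (D.finite_toSet.measure_zero μ))]
  exact ContinuousOn.aestronglyMeasurable (fun t ht => (hD t ht.1 ht.2).mono sdiff_subset)
    (hs.diff D.finite_toSet.measurableSet)

theorem intervalIntegrable_comp_of_norm_le {E F G : Type*} [NormedAddCommGroup E]
    [NormedAddCommGroup F] [ProperSpace F] [NormedAddCommGroup G] {f : E → F → G}
    (hf : Continuous (Function.uncurry f)) {X : ℝ → E} {w : ℝ → F} {a b ρ : ℝ}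
    (hX : ContinuousOn X (Icc a b)) (hw : AEStronglyMeasurable w (volume.restrict (Icc a b)))
    (hwb : ∀ t ∈ Icc a b, ‖w t‖ ≤ ρ) ⦃c d : ℝ⦄ (hc : c ∈ Icc a b) (hd : d ∈ Icc a b) :
    IntervalIntegrable (fun t => f (X t) (w t)) volume c d := by
  have hcd : uIcc c d ⊆ Icc a b := uIcc_subset_Icc hc hd
  obtain ⟨C, hC⟩ := ((isCompact_uIcc.image_of_continuousOn (hX.mono hcd)).prod
    (isCompact_closedBall (0 : F) ρ)).exists_bound_of_continuousOn hf.continuousOn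
  rw [intervalIntegrable_iff]
  refine IntegrableOn.of_bound measure_Ioc_lt_top (hf.comp_aestronglyMeasurable
    (((hX.mono (uIoc_subset_uIcc.trans hcd)).aestronglyMeasurable measurableSet_uIoc).prodMk
      (hw.mono_measure (Measure.restrict_mono (uIoc_subset_uIcc.trans hcd) le_rfl)))) C ?_
  filter_upwards [ae_restrict_mem measurableSet_uIoc] with t ht
  exact hC (X t, w t) ⟨mem_image_of_mem X (uIoc_subset_uIcc ht),
    by simpa using hwb t (hcd (uIoc_subset_uIcc ht))⟩

section Perturbation

variable {m : ℕ} {u : ℝ → EucSp m} {τ ε ρ : ℝ} {v : EucSp m}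

theorem perturb_eq_piecewise (u : ℝ → EucSp m) (τ : ℝ) (v : EucSp m) (ε : ℝ) :
    perturb u τ v ε = (Ioc (τ - ε) τ).piecewise (fun _ => v) u := by
  funext t
  simp [perturb, Set.piecewise, mem_Ioc]

theorem perturb_of_mem {t : ℝ} (ht : t ∈ Ioc (τ - ε) τ) : perturb u τ v ε t = v := by
  simp [perturb_eq_piecewise, ht]

theorem MeasureTheory.AEStronglyMeasurable.perturb {μ : Measure ℝ} (hu : AEStronglyMeasurable u μ) :
    AEStronglyMeasurable (perturb u τ v ε) μ := by
  rw [perturb_eq_piecewise]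
  exact aestronglyMeasurable_const.piecewise measurableSet_Ioc hu.restrict

theorem norm_perturb_le {t : ℝ} (hv : ‖v‖ ≤ ρ) (hu : ‖u t‖ ≤ ρ) : ‖perturb u τ v ε t‖ ≤ ρ := by
  rw [perturb_eq_piecewise]
  by_cases ht : t ∈ Ioc (τ - ε) τ <;> simp [ht, hv, hu]

theorem norm_perturb_sub_le {t : ℝ} (hv : ‖v‖ ≤ ρ) (hu : ‖u t‖ ≤ ρ) :
    ‖perturb u τ v ε t - u t‖ ≤ (Ioc (τ - ε) τ).indicator (fun _ => 2 * ρ) t := by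
  rw [perturb_eq_piecewise]
  by_cases ht : t ∈ Ioc (τ - ε) τ
  · simp only [piecewise_eq_of_mem _ _ _ ht, indicator_of_mem ht]
    linarith [norm_sub_le v (u t)]
  · simp [ht]

end Perturbation

theorem norm_sub_le_of_isSolOn_perturb {nx m : ℕ} {f : EucSp nx → EucSp m → EucSp nx}
    {u : ℝ → EucSp m} {x y : ℝ → EucSp nx} {v : EucSp m} {τ ε ρ K : ℝ}
    (hf : Continuous (Function.uncurry f)) (hK : 0 ≤ K)
    (hLip : ∀ (x' x'' : EucSp nx) (u' u'' : EucSp m), ‖u'‖ ≤ ρ → ‖u''‖ ≤ ρ →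
      ‖f x' u' - f x'' u''‖ ≤ K * (‖x' - x''‖ + ‖u' - u''‖))
    (hum : AEStronglyMeasurable u (volume.restrict (Icc 0 1)))
    (hub : ∀ t ∈ Icc (0 : ℝ) 1, ‖u t‖ ≤ ρ) (hv : ‖v‖ ≤ ρ) (hε : 0 ≤ ε)
    (hx : IsSolOn f u 0 1 x) (hy : IsSolOn f (perturb u τ v ε) 0 1 y) (h0 : y 0 = x 0) :
    ∀ t ∈ Icc (0 : ℝ) 1, ‖y t - x t‖ ≤ 2 * K * ρ * exp K * ε := by
  have hρ : 0 ≤ ρ := (norm_nonneg v).trans hv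
  have hiy := intervalIntegrable_comp_of_norm_le hf hy.1 hum.perturb
    (w := perturb u τ v ε) fun t ht => norm_perturb_le hv (hub t ht)
  have hix := intervalIntegrable_comp_of_norm_le hf hx.1 hum hub
  have h01 : (0 : ℝ) ∈ Icc 0 1 := left_mem_Icc.2 zero_le_one
  have hz : ∀ t ∈ Icc (0 : ℝ) 1, y t - x t =
      ∫ s in 0..t, (f (y s) (perturb u τ v ε s) - f (x s) (u s)) := by
    intro t ht
    rw [intervalIntegral.integral_sub (hiy h01 ht) (hix h01 ht), hy.2 t ht, hx.2 t ht, h0]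
    abel
  have hgron := norm_le_mul_exp_of_eq_integral
    ((hiy h01 (right_mem_Icc.2 zero_le_one)).sub (hix h01 (right_mem_Icc.2 zero_le_one))) hz hK
    (h := fun s => K * (Ioc (τ - ε) τ).indicator (fun _ => 2 * ρ) s) (B := K * (ε * (2 * ρ)))
    (fun s hs => (hLip _ _ _ _ (norm_perturb_le hv (hub s hs)) (hub s hs)).trans <| by
      rw [mul_add]; gcongr; exact norm_perturb_sub_le hv (hub s hs))
    (fun s => mul_nonneg hK (indicator_nonneg (fun _ _ => by positivity) s))
    ((integrable_indicator_iff measurableSet_Ioc).2 (integrableOn_const measure_Ioc_lt_top.ne)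
      |>.const_mul K)
    (by rw [integral_const_mul, integral_indicator_const _ measurableSet_Ioc,
      volume_real_Ioc_of_le (by linarith), sub_sub_cancel, smul_eq_mul])
  intro t ht
  calc ‖y t - x t‖ ≤ K * (ε * (2 * ρ)) * exp (K * (t - 0)) := hgron t ht
    _ ≤ K * (ε * (2 * ρ)) * exp K := by
        gcongr
        nlinarith [ht.2]
    _ = 2 * K * ρ * exp K * ε := by ring

theorem norm_window_average_sub_le {E : Type*} [NormedAddCommGroup E] [NormedSpace ℝ E]
    [CompleteSpace E] {φ : ℝ → E} {L : E} {τ ε r : ℝ} (hε : 0 < ε)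
    (hφ : IntervalIntegrable φ volume (τ - ε) τ) (h : ∀ t ∈ Ioc (τ - ε) τ, ‖φ t - L‖ ≤ r) :
    ‖ε⁻¹ • (∫ t in (τ - ε)..τ, φ t) - L‖ ≤ r := by
  have hle : τ - ε ≤ τ := by linarith
  have hint : ‖∫ t in (τ - ε)..τ, (φ t - L)‖ ≤ r * ε :=
    calc _ ≤ r * |τ - (τ - ε)| := intervalIntegral.norm_integral_le_of_norm_le_const
          fun t ht => h t (by rwa [uIoc_of_le hle] at ht)
      _ = r * ε := by rw [sub_sub_cancel, abs_of_pos hε]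
  have heq : ε⁻¹ • (∫ t in (τ - ε)..τ, φ t) - L = ε⁻¹ • ∫ t in (τ - ε)..τ, (φ t - L) := by
    rw [intervalIntegral.integral_sub hφ intervalIntegrable_const,
      intervalIntegral.integral_const, sub_sub_cancel, smul_sub, inv_smul_smul₀ hε.ne']
  rw [heq, norm_smul, Real.norm_of_nonneg (inv_nonneg.2 hε.le)]
  calc ε⁻¹ * ‖∫ t in (τ - ε)..τ, (φ t - L)‖ ≤ ε⁻¹ * (r * ε) := by gcongr
    _ = r := by field_simp

def windowFilter (τ : ℝ) : Filter (ℝ × ℝ) :=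
  𝓝[>] 0 ×ˢ ⊤ ⊓ 𝓟 {p | p.2 ∈ Ioc (τ - p.1) τ}

theorem tendsto_fst_windowFilter (τ : ℝ) : Tendsto Prod.fst (windowFilter τ) (𝓝[>] 0) :=
  tendsto_fst.mono_left inf_le_left

theorem eventually_mem_windowFilter (τ : ℝ) :
    ∀ᶠ p in windowFilter τ, p.2 ∈ Ioc (τ - p.1) τ :=
  mem_inf_of_right (mem_principal_self _)

theorem tendsto_snd_windowFilter (τ : ℝ) : Tendsto Prod.snd (windowFilter τ) (𝓝[≤] τ) := by
  have hfst : Tendsto Prod.fst (windowFilter τ) (𝓝 0) :=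
    (tendsto_fst_windowFilter τ).mono_right nhdsWithin_le_nhds
  refine tendsto_nhdsWithin_iff.2 ⟨?_, (eventually_mem_windowFilter τ).mono fun p hp => hp.2⟩
  refine tendsto_of_tendsto_of_tendsto_of_le_of_le' ?_ tendsto_const_nhds
    ((eventually_mem_windowFilter τ).mono fun p hp => hp.1.le)
    ((eventually_mem_windowFilter τ).mono fun p hp => hp.2)
  simpa using tendsto_const_nhds.sub hfst (a := τ)

theorem ContinuousWithinAt.tendsto_windowFilter {E : Type*} [TopologicalSpace E] {x : ℝ → E}
    {τ : ℝ} (hx : ContinuousWithinAt x (Iic τ) τ) :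
    Tendsto (fun p : ℝ × ℝ => x p.2) (windowFilter τ) (𝓝 (x τ)) :=
  hx.tendsto.comp (tendsto_snd_windowFilter τ)

theorem tendsto_windowFilter_of_norm_sub_le {E : Type*} [SeminormedAddCommGroup E]
    {x : ℝ → E} {y : ℝ → ℝ → E} {τ C : ℝ} {a : E}
    (hx : Tendsto (fun p : ℝ × ℝ => x p.2) (windowFilter τ) (𝓝 a))
    (hy : ∀ᶠ p in windowFilter τ, ‖y p.1 p.2 - x p.2‖ ≤ C * p.1) :
    Tendsto (fun p : ℝ × ℝ => y p.1 p.2) (windowFilter τ) (𝓝 a) := by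
  have hsmall : Tendsto (fun p : ℝ × ℝ => y p.1 p.2 - x p.2) (windowFilter τ) (𝓝 0) :=
    squeeze_zero_norm' hy <| by
      simpa using ((tendsto_fst_windowFilter τ).mono_right nhdsWithin_le_nhds).const_mul C
  simpa using hsmall.add hx

theorem tendsto_window_average {E : Type*} [NormedAddCommGroup E] [NormedSpace ℝ E]
    [CompleteSpace E] {φ : ℝ → ℝ → E} {L : E} {τ : ℝ}
    (hφ : Tendsto (Function.uncurry φ) (windowFilter τ) (𝓝 L))
    (hint : ∀ᶠ ε in 𝓝[>] 0, IntervalIntegrable (φ ε) volume (τ - ε) τ) :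
    Tendsto (fun ε => ε⁻¹ • ∫ t in (τ - ε)..τ, φ ε t) (𝓝[>] 0) (𝓝 L) := by
  refine Metric.tendsto_nhds.2 fun η hη => ?_
  have hclose := hφ.eventually (Metric.closedBall_mem_nhds L (half_pos hη))
  rw [windowFilter, eventually_inf_principal] at hclose
  filter_upwards [mem_prod_top.1 hclose, hint, self_mem_nhdsWithin] with ε hε hεi (hε0 : 0 < ε)
  rw [dist_eq_norm]
  refine (norm_window_average_sub_le hε0 hεi fun t ht => ?_).trans_lt (half_lt_self hη)
  simpa [dist_eq_norm] using hε t ht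

/-- Lemma 12: the averaged difference of the dynamics over the perturbation
interval converges, as `ε → 0⁺`, to `f(x₁(τ), v) − f(x₁(τ), u(τ))`. -/
theorem averaged_dynamics_difference_limit {nx m : ℕ} (T : ℕ) (hT : 1 ≤ T)
    (ρmax K₁ : ℝ) (hK₁ : 1 ≤ K₁)
    (f : EucSp nx → EucSp m → EucSp nx)
    (hf : ContDiff ℝ 1 fun p : EucSp nx × EucSp m => f p.1 p.2)
    (hLip : ∀ (x' x'' : EucSp nx) (u' u'' : EucSp m), ‖u'‖ ≤ ρmax → ‖u''‖ ≤ ρmax →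
      ‖f x' u' - f x'' u''‖ ≤ K₁ * (‖x' - x''‖ + ‖u' - u''‖))
    (u : ℝ → EucSp m) (hu : AdmissibleCtrl (T : ℝ) ρmax u)
    (τ : ℝ) (hτ : τ ∈ Set.Ioo (0 : ℝ) 1) (v : EucSp m) (hv : ‖v‖ ≤ ρmax)
    (huτ : ContinuousWithinAt u (Set.Iic τ) τ)
    (x₀ : EucSp nx) (x : ℝ → EucSp nx) (xe : ℝ → ℝ → EucSp nx)
    (hxnom : x 0 = x₀ ∧ IsSolOn f u 0 1 x)
    (hxe : ∀ ε ∈ Set.Icc (0 : ℝ) τ,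
      xe ε 0 = x₀ ∧ IsSolOn f (perturb u τ v ε) 0 1 (xe ε)) :
    Tendsto
      (fun ε : ℝ => ε⁻¹ •
        ∫ t in (τ - ε)..τ, (f (xe ε t) (perturb u τ v ε t) - f (x t) (u t)))
      (𝓝[>] 0) (𝓝 (f (x τ) v - f (x τ) (u τ))) := by
  obtain ⟨hτ0, hτ1⟩ := hτ
  have hfc : Continuous (Function.uncurry f) := hf.continuous
  have hT1 : Icc (0 : ℝ) 1 ⊆ Icc 0 T := Icc_subset_Icc_right (by exact_mod_cast hT)
  have hub : ∀ t ∈ Icc (0 : ℝ) 1, ‖u t‖ ≤ ρmax := fun t ht => hu.2 t (hT1 ht)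
  have hum : AEStronglyMeasurable u (volume.restrict (Icc 0 1)) :=
    (hu.1.aestronglyMeasurable measurableSet_Icc).mono_measure (Measure.restrict_mono hT1 le_rfl)
  have hwin : ∀ᶠ p in windowFilter τ,
      p.1 ∈ Icc 0 τ ∧ p.2 ∈ Icc 0 1 ∧ perturb u τ v p.1 p.2 = v := by
    filter_upwards [(tendsto_fst_windowFilter τ).eventually (Ioo_mem_nhdsGT hτ0),
      eventually_mem_windowFilter τ] with p hp1 hp2
    exact ⟨Ioo_subset_Icc_self hp1, ⟨by linarith [hp1.2, hp2.1], by linarith [hp2.2]⟩,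
      perturb_of_mem hp2⟩
  have hx : ContinuousWithinAt x (Iic τ) τ := (hxnom.2.1 τ ⟨hτ0.le, hτ1.le⟩).mono_of_mem_nhdsWithin
    (mem_of_superset (Icc_mem_nhdsLE hτ0) (Icc_subset_Icc_right hτ1.le))
  have hxe' := tendsto_windowFilter_of_norm_sub_le hx.tendsto_windowFilter
    (hwin.mono fun p hp => norm_sub_le_of_isSolOn_perturb hfc (by linarith) hLip hum hub hv
      hp.1.1 hxnom.2 (hxe _ hp.1).2 ((hxe _ hp.1).1.trans hxnom.1.symm) p.2 hp.2.1)
  refine tendsto_window_average ?_ ?_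
  · refine (((hfc.tendsto (x τ, v)).comp (hxe'.prodMk_nhds tendsto_const_nhds)).sub
      ((hfc.tendsto (x τ, u τ)).comp (hx.tendsto_windowFilter.prodMk_nhds
        huτ.tendsto_windowFilter))).congr' (hwin.mono fun p hp => ?_)
    simp [Function.uncurry, hp.2.2]
  · filter_upwards [Ioo_mem_nhdsGT hτ0] with ε hε
    have hl : τ - ε ∈ Icc (0 : ℝ) 1 := ⟨by linarith [hε.2], by linarith [hε.1]⟩
    have hr : τ ∈ Icc (0 : ℝ) 1 := ⟨hτ0.le, hτ1.le⟩
    exact (intervalIntegrable_comp_of_norm_le hfc (hxe ε (Ioo_subset_Icc_self hε)).2.1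
      hum.perturb (fun t ht => norm_perturb_le hv (hub t ht)) hl hr).sub
      (intervalIntegrable_comp_of_norm_le hfc hxnom.2.1 hum hub hl hr)
end
end
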